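/- arXiv:2601.13194 — 5 statements merged into one kernel-verified Lean document; each statement's English description precedes it below -/
import Mathlib

section
/- Let k ≥ 1 and 1 ≤ r ≤ k−1, set m = 2k − r, and let I and J be two k-element subsets of [m] with I ∪ J = [m] and |I ∩ J| = r. Then for any fixed pattern μ (a permutation of [k]), the number of permutations σ of [m] such that μ occurs in σ at the index set I and μ also occurs in σ at the index set J is at most 2^(2k−2r). -/
/-- The pattern `μ` (a permutation of `[k]`) occurs in the permutation `σ` of `[m]`
at the index set `S` if `S` is the image of a strictly increasing map on which
`σ` is order-isomorphic to `μ`. -/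
def OccursAt {k m : ℕ} (μ : Equiv.Perm (Fin k)) (σ : Equiv.Perm (Fin m))
    (S : Finset (Fin m)) : Prop :=
  ∃ f : Fin k → Fin m, StrictMono f ∧ Finset.image f Finset.univ = S ∧
    ∀ a b : Fin k, μ a < μ b ↔ σ (f a) < σ (f b)

open Finset

namespace DoubleOccAux

variable {m k : ℕ}

/-- rank of `σ p` among the values of `σ` on `S`. -/
def rk (σ : Equiv.Perm (Fin m)) (S : Finset (Fin m)) (p : Fin m) : ℕ :=
  (S.filter fun q => σ q < σ p).card

lemma rk_lt_rk_iff {σ : Equiv.Perm (Fin m)} {S : Finset (Fin m)} {p q : Fin m}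
    (hp : p ∈ S) (hq : q ∈ S) : rk σ S p < rk σ S q ↔ σ p < σ q := by
  constructor
  · intro h
    by_contra hc
    push_neg at hc
    have hsub : (S.filter fun x => σ x < σ q) ⊆ (S.filter fun x => σ x < σ p) := by
      intro x hx
      simp only [mem_filter] at hx ⊢
      exact ⟨hx.1, lt_of_lt_of_le hx.2 hc⟩
    have := Finset.card_le_card hsub
    unfold rk at h
    omega
  · intro h
    apply Finset.card_lt_card
    constructor
    · intro x hx
      simp only [mem_filter] at hx ⊢
      exact ⟨hx.1, hx.2.trans h⟩
    · intro hsub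
      have hpmem : p ∈ S.filter fun x => σ x < σ q := mem_filter.2 ⟨hp, h⟩
      have := mem_filter.1 (hsub hpmem)
      exact lt_irrefl _ this.2

lemma rk_injOn (σ : Equiv.Perm (Fin m)) (S : Finset (Fin m)) :
    Set.InjOn (rk σ S) S := by
  intro p hp q hq h
  rcases lt_trichotomy (σ p) (σ q) with hlt | heq | hgt
  · exact absurd ((rk_lt_rk_iff hp hq).2 hlt) (by omega)
  · exact σ.injective heq
  · exact absurd ((rk_lt_rk_iff hq hp).2 hgt) (by omega)

lemma rk_lt_card {σ : Equiv.Perm (Fin m)} {S : Finset (Fin m)} {p : Fin m}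
    (hp : p ∈ S) : rk σ S p < S.card := by
  have hsub : (S.filter fun q => σ q < σ p) ⊆ S.erase p := by
    intro x hx
    simp only [mem_filter] at hx
    exact mem_erase.2 ⟨fun h => absurd (congrArg σ h) (ne_of_lt hx.2), hx.1⟩
  have h1 := Finset.card_le_card hsub
  have h2 := Finset.card_erase_of_mem hp
  have h3 : 0 < S.card := Finset.card_pos.2 ⟨p, hp⟩
  unfold rk
  omega

lemma filter_image_rk {σ : Equiv.Perm (Fin m)} {S A : Finset (Fin m)} {x : Fin m}
    (hA : A ⊆ S) (hx : x ∈ S) :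
    (A.image (rk σ S)).filter (· < rk σ S x) =
      (A.filter fun q => σ q < σ x).image (rk σ S) := by
  ext t
  simp only [mem_filter, mem_image]
  constructor
  · rintro ⟨⟨q, hqA, rfl⟩, ht⟩
    exact ⟨q, ⟨hqA, (rk_lt_rk_iff (hA hqA) hx).1 ht⟩, rfl⟩
  · rintro ⟨q, ⟨hqA, hlt⟩, rfl⟩
    exact ⟨⟨q, hqA, rfl⟩, (rk_lt_rk_iff (hA hqA) hx).2 hlt⟩

lemma eq_of_card_filter_lt {T : Finset ℕ} {x y : ℕ} (hx : x ∈ T) (hy : y ∈ T)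
    (h : (T.filter (· < x)).card = (T.filter (· < y)).card) : x = y := by
  rcases lt_trichotomy x y with hlt | heq | hgt
  · exfalso
    have : (T.filter (· < x)) ⊂ (T.filter (· < y)) := by
      constructor
      · intro z hz
        simp only [mem_filter] at hz ⊢
        exact ⟨hz.1, hz.2.trans hlt⟩
      · intro hsub
        have : x ∈ T.filter (· < y) := mem_filter.2 ⟨hx, hlt⟩
        have := mem_filter.1 (hsub this)
        exact lt_irrefl _ this.2
    have := Finset.card_lt_card this
    omega
  · exact heq
  · exfalso
    have : (T.filter (· < y)) ⊂ (T.filter (· < x)) := by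
      constructor
      · intro z hz
        simp only [mem_filter] at hz ⊢
        exact ⟨hz.1, hz.2.trans hgt⟩
      · intro hsub
        have : y ∈ T.filter (· < x) := mem_filter.2 ⟨hy, hgt⟩
        have := mem_filter.1 (hsub this)
        exact lt_irrefl _ this.2
    have := Finset.card_lt_card this
    omega

/-- If `μ` occurs in both `σ` and `τ` at the same set `I`, then `σ` and `τ` compare
the elements of `I` in the same way. -/
lemma compare_of_occ (μ : Equiv.Perm (Fin k)) (σ τ : Equiv.Perm (Fin m))
    {I : Finset (Fin m)} (hI : I.card = k)
    (hσ : OccursAt μ σ I) (hτ : OccursAt μ τ I) :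
    ∀ p ∈ I, ∀ q ∈ I, (σ p < σ q ↔ τ p < τ q) := by
  have key : ∀ (ρ : Equiv.Perm (Fin m)), OccursAt μ ρ I →
      ∀ a b : Fin k, μ a < μ b ↔ ρ (I.orderEmbOfFin hI a) < ρ (I.orderEmbOfFin hI b) := by
    intro ρ ⟨f, hmono, himg, hpat⟩ a b
    have hf : f = ⇑(I.orderEmbOfFin hI) := by
      apply Finset.orderEmbOfFin_unique hI _ hmono
      intro x
      rw [← himg]
      exact Finset.mem_image_of_mem f (Finset.mem_univ x)
    rw [← hf]
    exact hpat a b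
  intro p hp q hq
  obtain ⟨a, ha⟩ : ∃ a, I.orderEmbOfFin hI a = p := by
    have : p ∈ Set.range (I.orderEmbOfFin hI) := by
      rw [Finset.range_orderEmbOfFin]; exact hp
    exact this
  obtain ⟨b, hb⟩ : ∃ b, I.orderEmbOfFin hI b = q := by
    have : q ∈ Set.range (I.orderEmbOfFin hI) := by
      rw [Finset.range_orderEmbOfFin]; exact hq
    exact this
  rw [← ha, ← hb, ← key σ hσ a b, key τ hτ a b]

/-- The key injectivity lemma: two permutations with double occurrences and the same
rank-encoding are equal. -/
lemma key_inj (μ : Equiv.Perm (Fin k)) (σ τ : Equiv.Perm (Fin m))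
    {I J : Finset (Fin m)} (hI : I.card = k) (hJ : J.card = k)
    (hIJ : I ∪ J = Finset.univ)
    (hσI : OccursAt μ σ I) (hσJ : OccursAt μ σ J)
    (hτI : OccursAt μ τ I) (hτJ : OccursAt μ τ J)
    (henc : (I \ J).image (rk σ ((I \ J) ∪ (J \ I))) =
            (I \ J).image (rk τ ((I \ J) ∪ (J \ I)))) : σ = τ := by
  set D := I \ J with hD
  set E := J \ I with hE
  set S := D ∪ E with hS
  have hDS : D ⊆ S := Finset.subset_union_left
  have hES : E ⊆ S := Finset.subset_union_right
  have hDI : D ⊆ I := Finset.sdiff_subset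
  have hEJ : E ⊆ J := Finset.sdiff_subset
  have hdisjDE : Disjoint D E := disjoint_sdiff_sdiff
  have hII := compare_of_occ μ σ τ hI hσI hτI
  have hJJ := compare_of_occ μ σ τ hJ hσJ hτJ
  -- images of S under the rank maps are `range S.card`
  have himgS : ∀ ρ : Equiv.Perm (Fin m), S.image (rk ρ S) = Finset.range S.card := by
    intro ρ
    apply Finset.eq_of_subset_of_card_le
    · intro t ht
      obtain ⟨p, hp, rfl⟩ := Finset.mem_image.1 ht
      exact Finset.mem_range.2 (rk_lt_card hp)
    · rw [Finset.card_range, Finset.card_image_of_injOn (rk_injOn ρ S)]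
  have hdisjTU : ∀ ρ : Equiv.Perm (Fin m), Disjoint (D.image (rk ρ S)) (E.image (rk ρ S)) := by
    intro ρ
    rw [Finset.disjoint_left]
    rintro t hT hU
    obtain ⟨p, hp, hpt⟩ := Finset.mem_image.1 hT
    obtain ⟨q, hq, hqt⟩ := Finset.mem_image.1 hU
    have : p = q := rk_injOn ρ S (hDS hp) (hES hq) (hpt.trans hqt.symm)
    exact Finset.disjoint_left.1 hdisjDE hp (this ▸ hq)
  have hUeq : ∀ ρ : Equiv.Perm (Fin m),
      E.image (rk ρ S) = Finset.range S.card \ (D.image (rk ρ S)) := by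
    intro ρ
    rw [← himgS ρ, hS, Finset.image_union, Finset.union_sdiff_cancel_left (hdisjTU ρ)]
  have hUστ : E.image (rk σ S) = E.image (rk τ S) := by
    rw [hUeq σ, hUeq τ, henc]
  -- ranks agree on S
  have hrk : ∀ p ∈ S, rk σ S p = rk τ S p := by
    intro p hp
    rcases Finset.mem_union.1 hp with hpD | hpE
    · -- p ∈ D
      have hfilt : D.filter (fun q => σ q < σ p) = D.filter (fun q => τ q < τ p) :=
        Finset.filter_congr fun q hq => hII q (hDI hq) p (hDI hpD)
      have h1 : ((D.image (rk σ S)).filter (· < rk σ S p)).card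
          = (D.filter fun q => σ q < σ p).card := by
        rw [filter_image_rk hDS (hDS hpD),
          Finset.card_image_of_injOn ((rk_injOn σ S).mono
            (fun x hx => hDS (Finset.mem_of_mem_filter x hx)))]
      have h2 : ((D.image (rk σ S)).filter (· < rk τ S p)).card
          = (D.filter fun q => τ q < τ p).card := by
        rw [henc, filter_image_rk hDS (hDS hpD),
          Finset.card_image_of_injOn ((rk_injOn τ S).mono
            (fun x hx => hDS (Finset.mem_of_mem_filter x hx)))]
      apply eq_of_card_filter_lt (T := D.image (rk σ S))
      · exact Finset.mem_image_of_mem _ hpD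
      · rw [henc]; exact Finset.mem_image_of_mem _ hpD
      · rw [h1, h2, hfilt]
    · -- p ∈ E
      have hfilt : E.filter (fun q => σ q < σ p) = E.filter (fun q => τ q < τ p) :=
        Finset.filter_congr fun q hq => hJJ q (hEJ hq) p (hEJ hpE)
      have h1 : ((E.image (rk σ S)).filter (· < rk σ S p)).card
          = (E.filter fun q => σ q < σ p).card := by
        rw [filter_image_rk hES (hES hpE),
          Finset.card_image_of_injOn ((rk_injOn σ S).mono
            (fun x hx => hES (Finset.mem_of_mem_filter x hx)))]
      have h2 : ((E.image (rk σ S)).filter (· < rk τ S p)).card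
          = (E.filter fun q => τ q < τ p).card := by
        rw [hUστ, filter_image_rk hES (hES hpE),
          Finset.card_image_of_injOn ((rk_injOn τ S).mono
            (fun x hx => hES (Finset.mem_of_mem_filter x hx)))]
      apply eq_of_card_filter_lt (T := E.image (rk σ S))
      · exact Finset.mem_image_of_mem _ hpE
      · rw [hUστ]; exact Finset.mem_image_of_mem _ hpE
      · rw [h1, h2, hfilt]
  -- σ and τ compare all pairs the same way
  have hAll : ∀ p q : Fin m, σ p < σ q ↔ τ p < τ q := by
    have hmem : ∀ p : Fin m, p ∈ I ∨ p ∈ J := by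
      intro p
      have : p ∈ I ∪ J := hIJ.symm ▸ Finset.mem_univ p
      exact Finset.mem_union.1 this
    have cross : ∀ p ∈ S, ∀ q ∈ S, (σ p < σ q ↔ τ p < τ q) := by
      intro p hp q hq
      rw [← rk_lt_rk_iff (σ := σ) hp hq, ← rk_lt_rk_iff (σ := τ) hp hq,
        hrk p hp, hrk q hq]
    intro p q
    by_cases hpI : p ∈ I <;> by_cases hqI : q ∈ I
    · exact hII p hpI q hqI
    · by_cases hpJ : p ∈ J
      · have hqJ : q ∈ J := (hmem q).resolve_left hqI
        exact hJJ p hpJ q hqJ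
      · have hqJ : q ∈ J := (hmem q).resolve_left hqI
        exact cross p (hDS (Finset.mem_sdiff.2 ⟨hpI, hpJ⟩)) q
          (hES (Finset.mem_sdiff.2 ⟨hqJ, hqI⟩))
    · by_cases hqJ : q ∈ J
      · have hpJ : p ∈ J := (hmem p).resolve_left hpI
        exact hJJ p hpJ q hqJ
      · have hpJ : p ∈ J := (hmem p).resolve_left hpI
        exact cross p (hES (Finset.mem_sdiff.2 ⟨hpJ, hpI⟩)) q
          (hDS (Finset.mem_sdiff.2 ⟨hqI, hqJ⟩))
    · have hpJ : p ∈ J := (hmem p).resolve_left hpI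
      have hqJ : q ∈ J := (hmem q).resolve_left hqI
      exact hJJ p hpJ q hqJ
  -- conclude σ = τ
  have hφmono : StrictMono (fun i => τ (σ.symm i)) := by
    intro u v huv
    have := (hAll (σ.symm u) (σ.symm v)).1 (by simpa using huv)
    exact this
  have hcard : (Finset.univ : Finset (Fin m)).card = m := by simp
  have hφ : (fun i => τ (σ.symm i)) = ⇑(Finset.univ.orderEmbOfFin hcard) :=
    Finset.orderEmbOfFin_unique hcard (fun x => Finset.mem_univ _) hφmono
  have hid : (fun i : Fin m => i) = ⇑(Finset.univ.orderEmbOfFin hcard) :=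
    Finset.orderEmbOfFin_unique hcard (fun x => Finset.mem_univ _) strictMono_id
  have hτσ : ∀ i, τ (σ.symm i) = i := fun i => congrFun (hφ.trans hid.symm) i
  apply Equiv.ext
  intro p
  have := hτσ (σ p)
  rw [Equiv.symm_apply_apply] at this
  exact this.symm

end DoubleOccAux

open DoubleOccAux in
theorem count_perms_double_occurrence (k r : ℕ) (hk : 1 ≤ k) (hr1 : 1 ≤ r)
    (hr2 : r ≤ k - 1) (I J : Finset (Fin (2 * k - r)))
    (hI : I.card = k) (hJ : J.card = k)
    (hIJ : I ∪ J = Finset.univ) (hcap : (I ∩ J).card = r)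
    (μ : Equiv.Perm (Fin k)) :
    Nat.card {σ : Equiv.Perm (Fin (2 * k - r)) // OccursAt μ σ I ∧ OccursAt μ σ J} ≤
      2 ^ (2 * k - 2 * r) := by
  have hrk : r < k := by omega
  set S := (I \ J) ∪ (J \ I) with hSdef
  have hDcard : (I \ J).card = k - r := by
    have := Finset.card_sdiff_add_card_inter I J
    omega
  have hEcard : (J \ I).card = k - r := by
    have := Finset.card_sdiff_add_card_inter J I
    rw [Finset.inter_comm] at this
    omega
  have hScard : S.card = 2 * k - 2 * r := by
    rw [hSdef, Finset.card_union_of_disjoint disjoint_sdiff_sdiff]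
    omega
  set P := (Finset.range (2 * k - 2 * r)).powerset with hP
  have hmem : ∀ σ : Equiv.Perm (Fin (2 * k - r)),
      (I \ J).image (rk σ S) ∈ P := by
    intro σ
    rw [hP, Finset.mem_powerset]
    intro t ht
    obtain ⟨p, hp, rfl⟩ := Finset.mem_image.1 ht
    have : p ∈ S := Finset.mem_union_left _ hp
    have := rk_lt_card (σ := σ) this
    rw [hScard] at this
    exact Finset.mem_range.2 this
  set f : {σ : Equiv.Perm (Fin (2 * k - r)) // OccursAt μ σ I ∧ OccursAt μ σ J} →
      {x // x ∈ P} := fun σ => ⟨(I \ J).image (rk σ.1 S), hmem σ.1⟩ with hf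
  have hfinj : Function.Injective f := by
    rintro ⟨σ, hσI, hσJ⟩ ⟨τ, hτI, hτJ⟩ h
    have henc : (I \ J).image (rk σ S) = (I \ J).image (rk τ S) :=
      congrArg Subtype.val h
    exact Subtype.ext (key_inj μ σ τ hI hJ hIJ hσI hσJ hτI hτJ henc)
  calc Nat.card {σ : Equiv.Perm (Fin (2 * k - r)) // OccursAt μ σ I ∧ OccursAt μ σ J}
      ≤ Nat.card {x // x ∈ P} := Nat.card_le_card_of_injective f hfinj
    _ = P.card := Nat.card_eq_finsetCard P
    _ = 2 ^ (2 * k - 2 * r) := by rw [hP, Finset.card_powerset, Finset.card_range]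
end

section
/- Let k ≥ 1 and 1 ≤ r ≤ k−1, set m = 2k − r, and let I and J be two k-element subsets of [m] with I ∪ J = [m] and |I ∩ J| = r. Let μ be a permutation of [k]. If σ and σ′ are permutations of [m] such that μ occurs at I and μ occurs at J in both σ and σ′, then σ and σ′ agree on every position of I ∩ J; that is, the values at the overlap positions are uniquely determined by μ, I, and J (explicitly, if u_s and l_s denote the ranks within μ corresponding to the s-th overlap position viewed inside J and inside I respectively, the value at that position must be u_s + l_s − s). -/
private lemma count_lt_eq {m : ℕ} (τ : Equiv.Perm (Fin m)) (a : Fin m) :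
    (Finset.univ.filter (fun z => τ z < a)).card = a.val := by
  have himg : Finset.image τ (Finset.univ.filter (fun z => τ z < a))
      = Finset.univ.filter (fun z => z < a) := by
    ext z
    simp only [Finset.mem_image, Finset.mem_filter, Finset.mem_univ, true_and]
    constructor
    · rintro ⟨y, hy, rfl⟩; exact hy
    · intro h; exact ⟨τ.symm z, by simpa using h, by simp⟩
  rw [← Finset.card_image_of_injective _ τ.injective, himg]
  have h2 : Finset.univ.filter (fun z : Fin m => z < a) = Finset.Iio a := by
    ext z; simp
  rw [h2]
  simp

private lemma main_count {k m : ℕ} (μ : Equiv.Perm (Fin k)) (τ : Equiv.Perm (Fin m))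
    (I J : Finset (Fin m)) (hIJ : I ∪ J = Finset.univ)
    (f g : Fin k → Fin m) (hfinj : Function.Injective f) (hginj : Function.Injective g)
    (hfI : Finset.image f Finset.univ = I) (hgJ : Finset.image g Finset.univ = J)
    (hfp : ∀ a b, μ a < μ b ↔ τ (f a) < τ (f b))
    (hgp : ∀ a b, μ a < μ b ↔ τ (g a) < τ (g b))
    (a c : Fin k) (hx : f a = g c) :
    (τ (f a)).val + (Finset.univ.filter (fun b => f b ∈ J ∧ μ b < μ a)).card
      = (Finset.univ.filter (fun b => μ b < μ a)).card
        + (Finset.univ.filter (fun b => μ b < μ c)).card := by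
  classical
  set p : Fin m → Prop := fun z => τ z < τ (f a) with hp
  have hA : (I.filter p).card = (Finset.univ.filter (fun b => μ b < μ a)).card := by
    rw [← hfI, Finset.filter_image, Finset.card_image_of_injective _ hfinj]
    congr 1
    apply Finset.filter_congr
    intro b _
    exact (hfp b a).symm
  have hB : (J.filter p).card = (Finset.univ.filter (fun b => μ b < μ c)).card := by
    rw [← hgJ, Finset.filter_image, Finset.card_image_of_injective _ hginj]
    congr 1
    apply Finset.filter_congr
    intro b _
    show τ (g b) < τ (f a) ↔ μ b < μ c
    rw [hx]
    exact (hgp b c).symm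
  have hC : ((I ∩ J).filter p).card
      = (Finset.univ.filter (fun b => f b ∈ J ∧ μ b < μ a)).card := by
    have hIJ' : I ∩ J = I.filter (· ∈ J) := by ext y; simp [Finset.mem_inter]
    rw [hIJ', Finset.filter_filter, ← hfI, Finset.filter_image,
      Finset.card_image_of_injective _ hfinj]
    congr 1
    apply Finset.filter_congr
    intro b _
    constructor
    · rintro ⟨h1, h2⟩; exact ⟨h1, (hfp b a).mpr h2⟩
    · rintro ⟨h1, h2⟩; exact ⟨h1, (hfp b a).mp h2⟩
  have hU : (Finset.univ.filter p).card = (τ (f a)).val := count_lt_eq τ (τ (f a))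
  have hie := Finset.card_union_add_card_inter (I.filter p) (J.filter p)
  rw [← Finset.filter_union, ← Finset.filter_inter_distrib, hIJ] at hie
  omega

/-- The values at the overlap positions of two index sets supporting the same
pattern are uniquely determined: any two permutations in which `μ` occurs at
both `I` and `J` agree on `I ∩ J`. -/
theorem overlap_values_unique (k r : ℕ) (hk : 1 ≤ k) (hr1 : 1 ≤ r)
    (hr2 : r ≤ k - 1) (I J : Finset (Fin (2 * k - r)))
    (hI : I.card = k) (hJ : J.card = k)
    (hIJ : I ∪ J = Finset.univ) (hcap : (I ∩ J).card = r)
    (μ : Equiv.Perm (Fin k)) (σ σ' : Equiv.Perm (Fin (2 * k - r)))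
    (hσI : OccursAt μ σ I) (hσJ : OccursAt μ σ J)
    (hσ'I : OccursAt μ σ' I) (hσ'J : OccursAt μ σ' J) :
    ∀ x ∈ I ∩ J, σ x = σ' x := by
  classical
  obtain ⟨f, hfm, hfI, hfp⟩ := hσI
  obtain ⟨g, hgm, hgJ, hgp⟩ := hσJ
  obtain ⟨f', hf'm, hf'I, hf'p⟩ := hσ'I
  obtain ⟨g', hg'm, hg'J, hg'p⟩ := hσ'J
  have huniq : ∀ (S : Finset (Fin (2 * k - r))) (hS : S.card = k)
      (u u' : Fin k → Fin (2 * k - r)), StrictMono u → StrictMono u' →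
      Finset.image u Finset.univ = S → Finset.image u' Finset.univ = S → u = u' := by
    intro S hS u u' hu hu' huS hu'S
    have h1 : ∀ i, u i ∈ S := fun i => by
      rw [← huS]; exact Finset.mem_image_of_mem u (Finset.mem_univ i)
    have h2 : ∀ i, u' i ∈ S := fun i => by
      rw [← hu'S]; exact Finset.mem_image_of_mem u' (Finset.mem_univ i)
    rw [Finset.orderEmbOfFin_unique hS h1 hu, Finset.orderEmbOfFin_unique hS h2 hu']
  have hff : f' = f := huniq I hI f' f hf'm hfm hf'I hfI
  have hgg : g' = g := huniq J hJ g' g hg'm hgm hg'J hgJ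
  rw [hff] at hf'p
  rw [hgg] at hg'p
  intro x hx
  have hxI : x ∈ I := (Finset.mem_inter.mp hx).1
  have hxJ : x ∈ J := (Finset.mem_inter.mp hx).2
  rw [← hfI] at hxI
  rw [← hgJ] at hxJ
  obtain ⟨a, -, ha⟩ := Finset.mem_image.mp hxI
  obtain ⟨c, -, hc⟩ := Finset.mem_image.mp hxJ
  have hac : f a = g c := by rw [ha, hc]
  have h1 := main_count μ σ I J hIJ f g hfm.injective hgm.injective hfI hgJ hfp hgp a c hac
  have h2 := main_count μ σ' I J hIJ f g hfm.injective hgm.injective hfI hgJ hf'p hg'p a c hac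
  rw [ha] at h1 h2
  have : (σ x).val = (σ' x).val := by omega
  exact Fin.ext this
end

section
/- For every integer n ≥ 1, Σ_{k=1}^n (7/2)·(1.57)^k·C(n,k)²/k! ≤ (7/2)·n·exp(3·(1.57)^(1/3)·n^(2/3)), where C(n,k) denotes the binomial coefficient n choose k. -/
theorem sum_error_terms_bound (n : ℕ) (hn : 1 ≤ n) :
    ∑ k ∈ Finset.Icc 1 n,
        (7 / 2) * (1.57 : ℝ) ^ k * (n.choose k : ℝ) ^ 2 / (Nat.factorial k : ℝ) ≤
      (7 / 2) * (n : ℝ) *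
        Real.exp (3 * (1.57 : ℝ) ^ ((1 : ℝ) / 3) * (n : ℝ) ^ ((2 : ℝ) / 3)) := by
  set c : ℝ := (1.57 : ℝ) ^ ((1 : ℝ) / 3) with hc
  have hcpos : 0 < c := Real.rpow_pos_of_pos (by norm_num) _
  have hnpos : (0 : ℝ) < (n : ℝ) := by exact_mod_cast hn
  set x : ℝ := c * (n : ℝ) ^ ((2 : ℝ) / 3) with hx
  have hxpos : 0 < x := mul_pos hcpos (Real.rpow_pos_of_pos hnpos _)
  have hc3 : c ^ (3 : ℕ) = (1.57 : ℝ) := by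
    rw [hc, ← Real.rpow_natCast ((1.57 : ℝ) ^ ((1:ℝ)/3)) 3, ← Real.rpow_mul (by norm_num)]
    norm_num
  have hn3 : ((n : ℝ) ^ ((2 : ℝ) / 3)) ^ (3 : ℕ) = (n : ℝ) ^ (2 : ℕ) := by
    rw [← Real.rpow_natCast ((n : ℝ) ^ ((2:ℝ)/3)) 3, ← Real.rpow_mul hnpos.le]
    norm_num
  have key : ∀ k ∈ Finset.Icc 1 n,
      (7 / 2) * (1.57 : ℝ) ^ k * (n.choose k : ℝ) ^ 2 / (Nat.factorial k : ℝ) ≤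
        (7 / 2) * Real.exp (3 * x) := by
    intro k _
    have hfpos : (0 : ℝ) < (Nat.factorial k : ℝ) := by
      exact_mod_cast Nat.factorial_pos k
    have h1 : (n.choose k : ℝ) ≤ (n : ℝ) ^ k / (Nat.factorial k : ℝ) := by
      exact_mod_cast Nat.choose_le_pow_div k n
    have hchoose_nonneg : (0 : ℝ) ≤ (n.choose k : ℝ) := by positivity
    have h2 : (n.choose k : ℝ) ^ 2 ≤ ((n : ℝ) ^ k / (Nat.factorial k : ℝ)) ^ 2 :=
      pow_le_pow_left₀ hchoose_nonneg h1 2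
    have h3 : (7 / 2) * (1.57 : ℝ) ^ k * (n.choose k : ℝ) ^ 2 / (Nat.factorial k : ℝ) ≤
        (7 / 2) * ((1.57 : ℝ) ^ k * ((n : ℝ) ^ k / (Nat.factorial k : ℝ)) ^ 2 /
          (Nat.factorial k : ℝ)) := by
      rw [mul_assoc, mul_div_assoc]
      gcongr
    refine h3.trans ?_
    gcongr (7/2) * ?_
    have heq : (1.57 : ℝ) ^ k * ((n : ℝ) ^ k / (Nat.factorial k : ℝ)) ^ 2 /
        (Nat.factorial k : ℝ) = (x ^ k / (Nat.factorial k : ℝ)) ^ (3 : ℕ) := by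
      have e1 : ((c ^ k) ^ (3 : ℕ)) = (1.57 : ℝ) ^ k := by
        rw [← pow_mul, mul_comm, pow_mul, hc3]
      have e2 : (((n : ℝ) ^ ((2 : ℝ) / 3)) ^ k) ^ (3 : ℕ) = ((n : ℝ) ^ (2 : ℕ)) ^ k := by
        rw [← pow_mul, mul_comm, pow_mul, hn3]
      rw [hx, mul_pow, div_pow, div_pow, mul_pow, e1, e2]
      field_simp
      ring
    rw [heq]
    have h4 : x ^ k / (Nat.factorial k : ℝ) ≤ Real.exp x :=
      Real.pow_div_factorial_le_exp x hxpos.le k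
    have h5 : (x ^ k / (Nat.factorial k : ℝ)) ^ (3 : ℕ) ≤ (Real.exp x) ^ (3 : ℕ) :=
      pow_le_pow_left₀ (by positivity) h4 3
    calc (x ^ k / (Nat.factorial k : ℝ)) ^ (3 : ℕ) ≤ (Real.exp x) ^ (3 : ℕ) := h5
      _ = Real.exp (3 * x) := by rw [← Real.exp_nat_mul]; norm_num
  calc ∑ k ∈ Finset.Icc 1 n,
        (7 / 2) * (1.57 : ℝ) ^ k * (n.choose k : ℝ) ^ 2 / (Nat.factorial k : ℝ)
      ≤ ∑ _k ∈ Finset.Icc 1 n, (7 / 2) * Real.exp (3 * x) := Finset.sum_le_sum key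
    _ = (n : ℝ) * ((7 / 2) * Real.exp (3 * x)) := by
        rw [Finset.sum_const, Nat.card_Icc]
        simp [nsmul_eq_mul]
    _ = (7 / 2) * (n : ℝ) * Real.exp (3 * c * (n : ℝ) ^ ((2 : ℝ) / 3)) := by
        rw [hx]; ring_nf
end

section
/- Let (k_n) be a sequence of integers with 1 ≤ k_n ≤ n for each n, and suppose liminf_{n→∞} k_n/√n > e. Then C(n, k_n)/k_n! → 0 as n → ∞, where C(n,k) denotes the binomial coefficient n choose k. -/
/-!
From `C(n, k) ≤ n ^ k / k!` and `k! ≥ (k / e) ^ k` one gets `C(n, k) / k! ≤ (e ^ 2 n / k ^ 2) ^ k`.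
If `k_n ≥ c √n` eventually with `c > e`, the base is at most `(e / c) ^ 2 < 1` while `k_n → ∞`,
so the bound tends to `0`.
-/

open Filter Real

lemma div_exp_one_pow_le_factorial (k : ℕ) : ((k : ℝ) / exp 1) ^ k ≤ k.factorial := by
  rw [div_pow, exp_one_pow, div_le_iff₀ (exp_pos _), mul_comm,
    ← div_le_iff₀ (by exact_mod_cast k.factorial_pos)]
  exact pow_div_factorial_le_exp _ k.cast_nonneg k

lemma choose_div_factorial_le_pow_div_factorial_sq (n k : ℕ) :
    (n.choose k : ℝ) / k.factorial ≤ (n : ℝ) ^ k / (k.factorial : ℝ) ^ 2 := by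
  rw [sq, ← div_div]
  exact div_le_div_of_nonneg_right (Nat.choose_le_pow_div k n) k.factorial.cast_nonneg

lemma choose_div_factorial_le_of_mul_sqrt_le {n k : ℕ} {c : ℝ} (hc : 0 < c)
    (h : c * √n ≤ k) :
    (n.choose k : ℝ) / k.factorial ≤ ((exp 1 / c) ^ 2) ^ k := by
  have hn : (n : ℝ) ≤ ((k : ℝ) / c) ^ 2 := by
    rw [← sq_sqrt n.cast_nonneg]
    exact pow_le_pow_left₀ (sqrt_nonneg _) ((le_div_iff₀' hc).mpr h) 2
  have hfac : 0 < (k.factorial : ℝ) ^ 2 := by positivity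
  refine (choose_div_factorial_le_pow_div_factorial_sq n k).trans ?_
  rw [div_le_iff₀ hfac]
  calc (n : ℝ) ^ k ≤ (((k : ℝ) / c) ^ 2) ^ k := pow_le_pow_left₀ n.cast_nonneg hn k
    _ = ((exp 1 / c * ((k : ℝ) / exp 1)) ^ 2) ^ k := by
      rw [div_mul_div_comm, mul_comm (exp 1), mul_div_mul_right _ _ (exp_pos 1).ne']
    _ = ((exp 1 / c) ^ 2) ^ k * (((k : ℝ) / exp 1) ^ k) ^ 2 := by ring
    _ ≤ ((exp 1 / c) ^ 2) ^ k * (k.factorial : ℝ) ^ 2 := by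
      gcongr
      exact div_exp_one_pow_le_factorial k

lemma eventually_mul_sqrt_le_of_lt_liminf {a : ℕ → ℝ} {c : ℝ}
    (h : (c : EReal) < atTop.liminf (fun n : ℕ => ((a n / √n : ℝ) : EReal))) :
    ∀ᶠ n : ℕ in atTop, c * √n ≤ a n := by
  filter_upwards [eventually_lt_of_lt_liminf h, eventually_gt_atTop 0] with n hlt hn
  have hsqrt : 0 < √(n : ℝ) := sqrt_pos.mpr (by exact_mod_cast hn)
  exact ((lt_div_iff₀ hsqrt).mp (by exact_mod_cast hlt)).le

lemma tendsto_atTop_of_eventually_mul_sqrt_le {k : ℕ → ℕ} {c : ℝ} (hc : 0 < c)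
    (h : ∀ᶠ n : ℕ in atTop, c * √n ≤ k n) : Tendsto k atTop atTop :=
  tendsto_natCast_atTop_iff.mp <| tendsto_atTop_mono' _ h <|
    (tendsto_sqrt_atTop.comp tendsto_natCast_atTop_atTop).const_mul_atTop hc

theorem choose_div_factorial_tendsto_zero_general (k : ℕ → ℕ)
    (hliminf : (Real.exp 1 : EReal) <
      atTop.liminf (fun n : ℕ => (((k n : ℝ) / Real.sqrt n : ℝ) : EReal))) :
    Tendsto (fun n : ℕ => (n.choose (k n) : ℝ) / (Nat.factorial (k n) : ℝ))
      atTop (nhds 0) := by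
  obtain ⟨c, hec, hc_lt⟩ := EReal.lt_iff_exists_real_btwn.mp hliminf
  have hec : exp 1 < c := by exact_mod_cast hec
  have hc : 0 < c := (exp_pos 1).trans hec
  have hk_ge := eventually_mul_sqrt_le_of_lt_liminf hc_lt
  have hratio : (exp 1 / c) ^ 2 < 1 :=
    pow_lt_one₀ (by positivity) ((div_lt_one hc).mpr hec) two_ne_zero
  refine squeeze_zero' (Eventually.of_forall fun n => by positivity)
    (hk_ge.mono fun n hn => choose_div_factorial_le_of_mul_sqrt_le hc hn) ?_
  exact (tendsto_pow_atTop_nhds_zero_of_lt_one (by positivity) hratio).comp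
    (tendsto_atTop_of_eventually_mul_sqrt_le hc hk_ge)

theorem choose_div_factorial_tendsto_zero (k : ℕ → ℕ)
    (hk : ∀ n : ℕ, 1 ≤ n → 1 ≤ k n ∧ k n ≤ n)
    (hliminf : (Real.exp 1 : EReal) <
      atTop.liminf (fun n : ℕ => (((k n : ℝ) / Real.sqrt n : ℝ) : EReal))) :
    Tendsto (fun n : ℕ => (n.choose (k n) : ℝ) / (Nat.factorial (k n) : ℝ))
      atTop (nhds 0) :=
  choose_div_factorial_tendsto_zero_general k hliminf
end

section
/- Let k ≥ 1 and 1 ≤ r ≤ k−1, set m = 2k − r, let I and J be two k-element subsets of [m] with I ∪ J = [m] and |I ∩ J| = r, and let μ be a permutation of [k]. For a permutation σ of [m], let σ̂ denote the unique permutation of [m] that agrees with σ on all positions outside J, whose set of values on J equals the set of values of σ on J, and in which μ occurs at the index set J. Then the number of permutations σ of [m] such that μ occurs at the index set I in σ̂ is at most k!·2^(2k−2r). -/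
/-! The hat `σ̂` of a friendly `σ` has `μ` at both `I` and `J`, and `σ = σ̂ * π` with `π` fixing
every position outside `J`; there are `k!` such `π`. A permutation `τ` with `μ` at both `I` and `J`
is recovered from one bit per position of `I ∆ J`: reading the values `0, 1, 2, …` in turn, the
position of a value is the `j`-th element of `I` (resp. `J`) in the order `μ⁻¹`, where `j` counts
the smaller values on `I` (resp. `J`); this decides it unless the position lies in `I ∆ J`, and
then the bit says whether it lies in `I` or in `J`. -/

open Finset

open scoped symmDiff Pointwise

namespace Finset

variable {α : Type*} [LinearOrder α] {k : ℕ}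

theorem card_filter_lt_orderEmbOfFin (s : Finset α) (h : #s = k) (j : Fin k) :
    #{u ∈ s | u < s.orderEmbOfFin h j} = j := by
  have : {u ∈ s | u < s.orderEmbOfFin h j} = (Iio j).map (s.orderEmbOfFin h).toEmbedding := by
    ext u
    simp only [mem_filter, mem_map, mem_Iio, RelEmbedding.coe_toEmbedding]
    constructor
    · rintro ⟨hu, hlt⟩
      obtain ⟨i, rfl⟩ : u ∈ Set.range (s.orderEmbOfFin h) := by simpa using hu
      exact ⟨i, by simpa using hlt, rfl⟩
    · rintro ⟨i, hi, rfl⟩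
      exact ⟨orderEmbOfFin_mem s h i, by simpa using hi⟩
  rw [this, card_map, Fin.card_Iio]

theorem exists_orderEmbOfFin_eq (s : Finset α) (h : #s = k) {v : α} (hv : v ∈ s) :
    ∃ j : Fin k, #{u ∈ s | u < v} = j ∧ s.orderEmbOfFin h j = v := by
  obtain ⟨j, rfl⟩ : v ∈ Set.range (s.orderEmbOfFin h) := by simp [hv]
  exact ⟨j, card_filter_lt_orderEmbOfFin s h j, rfl⟩

end Finset

section Reconstruction

variable {k m : ℕ} {μ : Equiv.Perm (Fin k)} {τ τ' : Equiv.Perm (Fin m)} {S : Finset (Fin m)}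

theorem card_filter_map_lt_congr {v : Fin m} (hv : Set.EqOn τ.symm τ'.symm (Set.Iio v))
    (S : Finset (Fin m)) :
    #{u ∈ S.map τ.toEmbedding | u < v} = #{u ∈ S.map τ'.toEmbedding | u < v} := by
  congr 1
  ext u
  simp only [mem_filter, mem_map_equiv]
  exact ⟨fun ⟨hu, hlt⟩ => ⟨hv hlt ▸ hu, hlt⟩, fun ⟨hu, hlt⟩ => ⟨(hv hlt).symm ▸ hu, hlt⟩⟩

/-- The `j`-th smallest value of `τ` on `S` sits at the `μ⁻¹ j`-th position of `S`. -/
theorem OccursAt.symm_orderEmbOfFin_map (h : OccursAt μ τ S) (hS : #S = k) (j : Fin k) :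
    τ.symm ((S.map τ.toEmbedding).orderEmbOfFin ((card_map _).trans hS) j) =
      S.orderEmbOfFin hS (μ.symm j) := by
  obtain ⟨f, hf, hfS, hpat⟩ := h
  have hf_eq : f = S.orderEmbOfFin hS :=
    orderEmbOfFin_unique hS (fun x => hfS ▸ mem_image_of_mem f (mem_univ x)) hf
  have hmono : StrictMono fun i => τ (f (μ.symm i)) := fun i j hij =>
    (hpat _ _).mp (by simp [hij])
  have hmem : ∀ i, τ (f (μ.symm i)) ∈ S.map τ.toEmbedding := fun i =>
    mem_map_equiv.mpr (by simp [← hfS])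
  rw [← orderEmbOfFin_unique _ hmem hmono, hf_eq]
  simp

theorem OccursAt.exists_symm_apply_eq (h : OccursAt μ τ S) (hS : #S = k) {v : Fin m}
    (hv : τ.symm v ∈ S) :
    ∃ j : Fin k, #{u ∈ S.map τ.toEmbedding | u < v} = j ∧
      τ.symm v = S.orderEmbOfFin hS (μ.symm j) := by
  obtain ⟨j, hcard, hj⟩ :=
    exists_orderEmbOfFin_eq _ ((card_map _).trans hS) (mem_map_equiv.mpr hv)
  exact ⟨j, hcard, hj ▸ h.symm_orderEmbOfFin_map hS j⟩

theorem OccursAt.symm_apply_eq_of_eqOn (h : OccursAt μ τ S) (h' : OccursAt μ τ' S)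
    (hS : #S = k) {v : Fin m} (hv : Set.EqOn τ.symm τ'.symm (Set.Iio v))
    (hτv : τ.symm v ∈ S) (hτ'v : τ'.symm v ∈ S) : τ.symm v = τ'.symm v := by
  obtain ⟨j, hj, hτj⟩ := h.exists_symm_apply_eq hS hτv
  obtain ⟨j', hj', hτ'j'⟩ := h'.exists_symm_apply_eq hS hτ'v
  obtain rfl : j = j' := Fin.ext (by rw [← hj, ← hj', card_filter_map_lt_congr hv])
  rw [hτj, hτ'j']

/-- Reading the values of `τ` on the positions `D` in increasing order, whether each of them
comes from a position in `A`. -/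
def valueWord (D A : Finset (Fin m)) (τ : Equiv.Perm (Fin m)) : Fin #D → Bool :=
  fun j => decide (τ.symm ((D.map τ.toEmbedding).orderEmbOfFin (card_map _) j) ∈ A)

theorem exists_valueWord_eq {D : Finset (Fin m)} (A : Finset (Fin m)) {v : Fin m}
    (hv : τ.symm v ∈ D) :
    ∃ j : Fin #D, #{u ∈ D.map τ.toEmbedding | u < v} = j ∧
      valueWord D A τ j = decide (τ.symm v ∈ A) := by
  obtain ⟨j, hcard, hj⟩ := exists_orderEmbOfFin_eq _ (card_map _) (mem_map_equiv.mpr hv)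
  exact ⟨j, hcard, by rw [valueWord, hj]⟩

theorem mem_iff_mem_of_valueWord_eq {D A : Finset (Fin m)}
    (hw : valueWord D A τ = valueWord D A τ') {v : Fin m}
    (hv : Set.EqOn τ.symm τ'.symm (Set.Iio v)) (hτv : τ.symm v ∈ D) (hτ'v : τ'.symm v ∈ D) :
    τ.symm v ∈ A ↔ τ'.symm v ∈ A := by
  obtain ⟨j, hj, hτj⟩ := exists_valueWord_eq A hτv
  obtain ⟨j', hj', hτ'j'⟩ := exists_valueWord_eq (τ := τ') A hτ'v
  obtain rfl : j = j' := Fin.ext (by rw [← hj, ← hj', card_filter_map_lt_congr hv])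
  simpa [hτj, hτ'j'] using congrFun hw j

theorem eq_of_occursAt_of_valueWord_eq {I J : Finset (Fin m)} (hI : #I = k) (hJ : #J = k)
    (hIJ : I ∪ J = univ) (hτI : OccursAt μ τ I) (hτJ : OccursAt μ τ J)
    (hτ'I : OccursAt μ τ' I) (hτ'J : OccursAt μ τ' J)
    (hw : valueWord (I ∆ J) I τ = valueWord (I ∆ J) I τ') : τ = τ' := by
  suffices h : τ.symm = τ'.symm from Equiv.symm_bijective.injective h
  refine Equiv.ext fun v => ?_
  induction v using WellFoundedLT.induction with
  | ind v ih =>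
    have hv : Set.EqOn τ.symm τ'.symm (Set.Iio v) := fun u hu => ih u hu
    have hmem : ∀ x : Fin m, x ∈ I ∨ x ∈ J := fun x => mem_union.mp (hIJ ▸ mem_univ x)
    by_cases hboth_I : τ.symm v ∈ I ∧ τ'.symm v ∈ I
    · exact hτI.symm_apply_eq_of_eqOn hτ'I hI hv hboth_I.1 hboth_I.2
    by_cases hboth_J : τ.symm v ∈ J ∧ τ'.symm v ∈ J
    · exact hτJ.symm_apply_eq_of_eqOn hτ'J hJ hv hboth_J.1 hboth_J.2
    -- one of the two positions lies in `I \ J` and the other in `J \ I`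
    have hword := mem_iff_mem_of_valueWord_eq hw hv
    have hτv := hmem (τ.symm v)
    have hτ'v := hmem (τ'.symm v)
    simp only [mem_symmDiff] at hword
    tauto

end Reconstruction

theorem natCard_occursAt_and_occursAt_le {k m : ℕ} (μ : Equiv.Perm (Fin k))
    {I J : Finset (Fin m)} (hI : #I = k) (hJ : #J = k) (hIJ : I ∪ J = univ) :
    Nat.card {τ : Equiv.Perm (Fin m) | OccursAt μ τ I ∧ OccursAt μ τ J} ≤ 2 ^ #(I ∆ J) := by
  have hinj : Function.Injective
      fun τ : {τ : Equiv.Perm (Fin m) | OccursAt μ τ I ∧ OccursAt μ τ J} =>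
        valueWord (I ∆ J) I τ.1 := fun τ τ' hw =>
    Subtype.ext (eq_of_occursAt_of_valueWord_eq hI hJ hIJ τ.2.1 τ.2.2 τ'.2.1 τ'.2.2 hw)
  simpa using Nat.card_le_card_of_injective _ hinj

theorem natCard_perm_fixing_compl {α : Type*} [Fintype α] [DecidableEq α] (J : Finset α) :
    Nat.card {π : Equiv.Perm α | ∀ x, x ∉ J → π x = x} = (#J).factorial := by
  change Nat.card {π : Equiv.Perm α // ∀ x, x ∉ J → π x = x} = _
  rw [← Nat.card_congr (Equiv.Perm.subtypeEquivSubtypePerm (· ∈ J)), Nat.card_perm]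
  simp

theorem card_symmDiff_of_union_eq_univ {m : ℕ} {I J : Finset (Fin m)} (hIJ : I ∪ J = univ) :
    #(I ∆ J) = m - #(I ∩ J) := by
  rw [symmDiff_eq_sup_sdiff_inf, sup_eq_union, inf_eq_inter, hIJ,
    card_sdiff_of_subset (subset_univ _), card_univ, Fintype.card_fin]

theorem count_friendly_perms_general (k r : ℕ) (I J : Finset (Fin (2 * k - r)))
    (hI : I.card = k) (hJ : J.card = k)
    (hIJ : I ∪ J = Finset.univ) (hcap : (I ∩ J).card = r)
    (μ : Equiv.Perm (Fin k)) :
    Nat.card {σ : Equiv.Perm (Fin (2 * k - r)) //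
        ∃ σhat : Equiv.Perm (Fin (2 * k - r)),
          (∀ x, x ∉ J → σhat x = σ x) ∧
          J.image ⇑σhat = J.image ⇑σ ∧
          OccursAt μ σhat J ∧
          OccursAt μ σhat I} ≤
      Nat.factorial k * 2 ^ (2 * k - 2 * r) := by
  set hats := {τ : Equiv.Perm (Fin (2 * k - r)) | OccursAt μ τ I ∧ OccursAt μ τ J}
  set fixing := {π : Equiv.Perm (Fin (2 * k - r)) | ∀ x, x ∉ J → π x = x}
  have hsub : {σ : Equiv.Perm (Fin (2 * k - r)) | ∃ σhat : Equiv.Perm (Fin (2 * k - r)),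
      (∀ x, x ∉ J → σhat x = σ x) ∧ J.image ⇑σhat = J.image ⇑σ ∧
        OccursAt μ σhat J ∧ OccursAt μ σhat I} ⊆ hats * fixing := by
    rintro σ ⟨σhat, hoff, -, hJocc, hIocc⟩
    refine ⟨σhat, ⟨hIocc, hJocc⟩, σhat⁻¹ * σ, fun x hx => ?_, mul_inv_cancel_left σhat σ⟩
    simp [← hoff x hx]
  have hd : #(I ∆ J) = 2 * k - 2 * r := by
    rw [card_symmDiff_of_union_eq_univ hIJ, hcap]
    omega
  calc Nat.card {σ | _}
      ≤ Nat.card (hats * fixing) := Nat.card_mono (Set.toFinite _) hsub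
    _ ≤ Nat.card hats * Nat.card fixing := Set.natCard_mul_le
    _ ≤ 2 ^ (2 * k - 2 * r) * k.factorial := by
      rw [natCard_perm_fixing_compl, hJ, ← hd]
      gcongr
      exact natCard_occursAt_and_occursAt_le μ hI hJ hIJ
    _ = k.factorial * 2 ^ (2 * k - 2 * r) := mul_comm _ _

/-- Counting the "friendly" permutations `σ`: those for which the permutation `σ̂`
obtained from `σ` by rearranging its values on `J` into the relative order
prescribed by `μ` (it agrees with `σ` off `J`, uses the same set of values on `J`,
and has `μ` occurring at `J`) also has `μ` occurring at `I`. -/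
theorem count_friendly_perms (k r : ℕ) (hk : 1 ≤ k) (hr1 : 1 ≤ r)
    (hr2 : r ≤ k - 1) (I J : Finset (Fin (2 * k - r)))
    (hI : I.card = k) (hJ : J.card = k)
    (hIJ : I ∪ J = Finset.univ) (hcap : (I ∩ J).card = r)
    (μ : Equiv.Perm (Fin k)) :
    Nat.card {σ : Equiv.Perm (Fin (2 * k - r)) //
        ∃ σhat : Equiv.Perm (Fin (2 * k - r)),
          (∀ x, x ∉ J → σhat x = σ x) ∧
          J.image ⇑σhat = J.image ⇑σ ∧
          OccursAt μ σhat J ∧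
          OccursAt μ σhat I} ≤
      Nat.factorial k * 2 ^ (2 * k - 2 * r) :=
  count_friendly_perms_general k r I J hI hJ hIJ hcap μ
end
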